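/- arXiv:2301.01359 — 4 statements merged into one kernel-verified Lean document; each statement's English description precedes it below -/
import Mathlib

section
/- For any cyclic shift c' of a composition c, the bivariate generating function of cylindric partitions with profile c equals that with profile c', i.e. F_c(z,q) = F_{c'}(z,q), where the exponent of z records the largest part and the exponent of q records the total size. -/
/-- `π : Fin r → ℕ → ℕ` is a cylindric partition with profile `c : Fin r → ℕ`
(indices `0,…,r-1` standing for `1,…,r`, cyclically) if each row is a weakly decreasing
sequence with finitely many nonzero parts, and `π^(i)_j ≥ π^(i+1)_{j + c_{i+1}}` cyclically. -/
def IsCylPart {r : ℕ} [NeZero r] (c : Fin r → ℕ) (π : Fin r → ℕ → ℕ) : Prop :=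
  (∀ i j, π i (j + 1) ≤ π i j) ∧
  (∀ i, ∃ N, ∀ j, N ≤ j → π i j = 0) ∧
  (∀ i j, π (i + 1) (j + c (i + 1)) ≤ π i j)

/-- Total size `|π|`: the sum of all parts. -/
noncomputable def cylSize {r : ℕ} (π : Fin r → ℕ → ℕ) : ℕ :=
  ∑ i, ∑ᶠ j, π i j

/-- The largest part of `π` (each row being weakly decreasing, its largest part is `π i 0`). -/
def cylMax {r : ℕ} (π : Fin r → ℕ → ℕ) : ℕ :=
  Finset.univ.sup fun i => π i 0

/-
Rotating the rows, `π ↦ (i ↦ π (i + d))`, is a bijection from the cylindric partitions of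
profile `c` onto those of the rotated profile `i ↦ c (i + d)`, and it preserves size and largest
part.
-/

lemma isCylPart_comp_addRight_iff {r : ℕ} [NeZero r] (c : Fin r → ℕ) (π : Fin r → ℕ → ℕ)
    (e : Fin r) : IsCylPart (fun i => c (i + e)) (fun i => π (i + e)) ↔ IsCylPart c π := by
  unfold IsCylPart
  simp only [add_right_comm _ (1 : Fin r) e]
  -- the explicit `p := fun _ => _` lets unification read `p` off the right-hand side
  refine and_congr ?_ (and_congr ?_ ?_) <;>
    exact Iff.symm ((add_right_surjective e).forall (p := fun _ => _))

lemma cylSize_comp_perm {r : ℕ} (π : Fin r → ℕ → ℕ) (σ : Equiv.Perm (Fin r)) :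
    cylSize (π ∘ σ) = cylSize π :=
  Fintype.sum_equiv σ _ _ fun _ => rfl

lemma cylMax_comp_perm {r : ℕ} (π : Fin r → ℕ → ℕ) (σ : Equiv.Perm (Fin r)) :
    cylMax (π ∘ σ) = cylMax π := by
  unfold cylMax
  conv_rhs => rw [← Finset.map_univ_equiv σ, Finset.sup_map]
  rfl

/-- For any cyclic shift `c'` of a profile `c`, the bivariate generating functions of cylindric
partitions agree: `F_c(z,q) = F_{c'}(z,q)`.  Stated coefficientwise: for every largest part `N`
and total size `M`, the number of cylindric partitions of profile `c` with largest part `N` and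
size `M` equals the corresponding number for the cyclically shifted profile `c'`. -/
theorem cylindric_genfun_cyclic_shift_invariant (r : ℕ) [NeZero r] (c : Fin r → ℕ) (d : Fin r)
    (M N : ℕ) :
    Nat.card {π : Fin r → ℕ → ℕ // IsCylPart c π ∧ cylSize π = M ∧ cylMax π = N} =
      Nat.card {π : Fin r → ℕ → ℕ //
        IsCylPart (fun i => c (i + d)) π ∧ cylSize π = M ∧ cylMax π = N} := by
  let rotate : (Fin r → ℕ → ℕ) ≃ (Fin r → ℕ → ℕ) :=
    (Equiv.addRight d).symm.arrowCongr (Equiv.refl _)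
  refine Nat.card_congr (rotate.subtypeEquiv fun π => ?_)
  rw [← isCylPart_comp_addRight_iff c π d, ← cylSize_comp_perm π (Equiv.addRight d),
    ← cylMax_comp_perm π (Equiv.addRight d)]
  rfl
end

section
/- Euler's Pentagonal Number Theorem: as formal power series, (q;q)_∞ = Σ_{i=-∞}^{∞} (-1)^i q^{i(3i+1)/2}. -/
/-!
Mathlib's pentagonal number theorem says that the `N`-th coefficient of the finite products
`∏ n ∈ s, (1 - X ^ (n + 1))` is eventually that of `pentagonalSeries`. Factors with `N ≤ n` are
`1` modulo `X ^ (N + 1)`, so `s = range N` is already far enough; and `i * (3 * i + 1) = 2 * N`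
says exactly that `N` is the pentagonal number of `-i`.
-/

open Finset PowerSeries

theorem natAbs_le_pentagonal (k : ℤ) : k.natAbs ≤ pentagonal k := by
  have h := two_mul_natCast_pentagonal k
  zify
  rcases abs_cases k with ⟨hk, _⟩ | ⟨hk, _⟩ <;> nlinarith

theorem mul_three_mul_add_one_eq_two_mul_iff {N : ℕ} {i : ℤ} :
    i * (3 * i + 1) = 2 * (N : ℤ) ↔ pentagonal (-i) = N := by
  rw [← two_mul_natCast_pentagonal_neg]
  omega

namespace PowerSeries

variable {R : Type*} [CommRing R]

theorem coeff_mul_of_X_pow_dvd_sub_one {f g : R⟦X⟧} {N : ℕ} (hg : X ^ (N + 1) ∣ g - 1) :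
    coeff N (f * g) = coeff N f := by
  have hfg : X ^ (N + 1) ∣ f * g - f := by
    simpa only [mul_sub, mul_one] using dvd_mul_of_dvd_right hg f
  exact sub_eq_zero.mp (by simpa using X_pow_dvd_iff.mp hfg N N.lt_succ_self)

theorem X_pow_dvd_prod_one_sub_X_pow_sub_one {s : Finset ℕ} {N : ℕ} (hs : ∀ n ∈ s, N ≤ n) :
    X ^ (N + 1) ∣ ∏ n ∈ s, (1 - X ^ (n + 1) : R⟦X⟧) - 1 := by
  refine prod_induction _ (fun f => X ^ (N + 1) ∣ f - 1) ?_ (by simp) ?_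
  · intro f g hf hg
    have hfg : f * g - 1 = (f - 1) * g + (g - 1) := by ring
    rw [hfg]
    exact dvd_add (dvd_mul_of_dvd_left hf g) hg
  · intro n hn
    rw [sub_sub_cancel_left, dvd_neg]
    exact pow_dvd_pow X (Nat.succ_le_succ (hs n hn))

theorem coeff_prod_one_sub_X_pow_of_range_subset {s : Finset ℕ} {N : ℕ} (hs : range N ⊆ s) :
    coeff N (∏ n ∈ s, (1 - X ^ (n + 1) : R⟦X⟧)) = coeff N (pentagonalSeries R) := by
  obtain ⟨t, ht⟩ := Filter.eventually_atTop.mp (coeff_prod_one_sub_X_pow_eventually_eq R N)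
  rw [← ht (s ∪ t) subset_union_right, ← union_sdiff_self_eq_union, prod_union disjoint_sdiff,
    coeff_mul_of_X_pow_dvd_sub_one]
  refine X_pow_dvd_prod_one_sub_X_pow_sub_one fun n hn => ?_
  have hn : n ∉ range N := fun h => (mem_sdiff.mp hn).2 (hs h)
  simpa using hn

theorem coeff_pentagonalSeries_eq_sum_Icc (N : ℕ) :
    coeff N (pentagonalSeries R) = ∑ i ∈ Icc (-(N : ℤ)) N,
      (if i * (3 * i + 1) = 2 * (N : ℤ) then (-1 : R) ^ i.natAbs else 0) := by
  simp_rw [mul_three_mul_add_one_eq_two_mul_iff]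
  by_cases hN : ∃ k, pentagonal k = N
  · obtain ⟨k, rfl⟩ := hN
    have hk : -k ∈ Icc (-(pentagonal k : ℤ)) (pentagonal k) := by
      have := natAbs_le_pentagonal k
      rw [mem_Icc]
      omega
    simp_rw [pentagonal_inj, neg_eq_iff_eq_neg]
    rw [sum_ite_eq', if_pos hk, coeff_pentagonalSeries_pentagonal, Int.coe_negOnePow,
      Int.natAbs_neg]
  · rw [coeff_pentagonalSeries_eq_zero R (by simpa using hN)]
    exact (sum_eq_zero fun i _ => if_neg fun hi => hN ⟨-i, hi⟩).symm

end PowerSeries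

/-- Euler's Pentagonal Number Theorem, stated coefficientwise:
for every `N`, the coefficient of `q^N` in the infinite product `(q;q)_∞ = ∏_{n≥1}(1-q^n)`
(which coincides with that of the partial product `∏_{n=1}^{N}(1-q^n)`, since further factors
do not affect coefficients up to degree `N`) equals `Σ_{i∈ℤ} (-1)^i [i(3i+1)/2 = N]`. -/
theorem euler_pentagonal_number_theorem :
    ∀ N : ℕ,
      (PowerSeries.coeff (R := ℤ) N) (∏ n ∈ Finset.range N, (1 - (PowerSeries.X : PowerSeries ℤ) ^ (n + 1))) =
        ∑ i ∈ Finset.Icc (-(N : ℤ)) (N : ℤ),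
          (if i * (3 * i + 1) = 2 * (N : ℤ) then (-1 : ℤ) ^ i.natAbs else 0) := by
  intro N
  rw [coeff_prod_one_sub_X_pow_of_range_subset subset_rfl, coeff_pentagonalSeries_eq_sum_Icc]
end

section
/- The second Rogers–Ramanujan identity: Σ_{n≥0} q^{n^2+n}/(q;q)_n = 1/((q^2;q^5)_∞ (q^3;q^5)_∞) as formal power series in q. -/
/-!
Schur's polynomials `e_n = Σ_k q^(k²+k) [n-k, k]_q` and
`E_n = Σ_j (-1)^j q^(j(5j+3)/2) [n+1, ⌊(n-5j)/2⌋]_q` satisfy the same recurrence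
`x (n+2) = x (n+1) + q^(n+2) x n` with the same initial values, hence are equal. As `n → ∞`,
`e_n` tends to the sum side and `E_n` to `Θ / (q;q)_∞`, where `Θ = Σ_j (-1)^j q^(j(5j+3)/2)`.
The finite form of Jacobi's triple product
`Σ_j (-1)^j q^(j(5j+3)/2) [2m, m+j]_{q^5} = ∏_{i<m} (1 - q^(5i+1)) (1 - q^(5i+4))`
gives `Θ = (q;q^5)_∞ (q^4;q^5)_∞ (q^5;q^5)_∞`, and dividing by `(q;q)_∞` leaves
`1 / ((q^2;q^5)_∞ (q^3;q^5)_∞)`. All limits are taken modulo `X^(N+1)`, where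
`[n, k]_q ≡ 1 / (q;q)_k` as soon as `n - k ≥ N`.
-/

open PowerSeries Finset

noncomputable section

section GaussianBinomial

variable {R : Type*} [CommRing R] (q : R)

def qPochhammer (n : ℕ) : R := ∏ i ∈ range n, (1 - q ^ (i + 1))

theorem qPochhammer_succ (n : ℕ) :
    qPochhammer q (n + 1) = qPochhammer q n * (1 - q ^ (n + 1)) :=
  prod_range_succ _ _

theorem qPochhammer_five_mul (L : ℕ) :
    qPochhammer q (5 * L) = (∏ i ∈ range L, (1 - q ^ (1 + 5 * i)) * (1 - q ^ (4 + 5 * i))) *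
      ((∏ i ∈ range L, (1 - q ^ (2 + 5 * i))) * ∏ i ∈ range L, (1 - q ^ (3 + 5 * i))) *
      qPochhammer (q ^ 5) L := by
  induction L with
  | zero => simp [qPochhammer]
  | succ L ih =>
    rw [show 5 * (L + 1) = 5 * L + 1 + 1 + 1 + 1 + 1 by ring]
    simp only [qPochhammer_succ, prod_range_succ, ih]
    ring

/-- The Gaussian binomial coefficient `[n, k]_q`, extended by zero to all `k : ℤ`. -/
def gaussBinom : ℕ → ℤ → R
  | 0, k => if k = 0 then 1 else 0
  | n + 1, k => q ^ k.toNat * gaussBinom n k + gaussBinom n (k - 1)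

theorem gaussBinom_succ (n : ℕ) (k : ℤ) :
    gaussBinom q (n + 1) k = q ^ k.toNat * gaussBinom q n k + gaussBinom q n (k - 1) := rfl

theorem gaussBinom_eq_zero {n : ℕ} {k : ℤ} (h : k < 0 ∨ n < k) : gaussBinom q n k = 0 := by
  induction n generalizing k with
  | zero => exact if_neg (by omega)
  | succ n ih => rw [gaussBinom_succ, ih (by omega), ih (by omega), mul_zero, add_zero]

@[simp]
theorem gaussBinom_zero_right (n : ℕ) : gaussBinom q n 0 = 1 := by
  induction n with
  | zero => rfl
  | succ n ih => rw [gaussBinom_succ, ih, gaussBinom_eq_zero q (by omega)]; simp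

theorem pow_mul_gaussBinom_congr (x : R) {a b n : ℕ} {k : ℤ} (h : 0 ≤ k → k ≤ n → a = b) :
    x ^ a * gaussBinom q n k = x ^ b * gaussBinom q n k := by
  by_cases hk : 0 ≤ k ∧ k ≤ n
  · rw [h hk.1 hk.2]
  · rw [gaussBinom_eq_zero q (by omega), mul_zero, mul_zero]

theorem gaussBinom_succ' (n : ℕ) (k : ℤ) :
    gaussBinom q (n + 1) k =
      gaussBinom q n k + q ^ ((n : ℤ) + 1 - k).toNat * gaussBinom q n (k - 1) := by
  induction n generalizing k with
  | zero =>
    have h₁ : q ^ k.toNat * gaussBinom q 0 k = q ^ 0 * gaussBinom q 0 k :=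
      pow_mul_gaussBinom_congr q q (by omega)
    have h₂ : q ^ 0 * gaussBinom q 0 (k - 1) =
        q ^ (((0 : ℕ) : ℤ) + 1 - k).toNat * gaussBinom q 0 (k - 1) :=
      pow_mul_gaussBinom_congr q q (by omega)
    rw [gaussBinom_succ]
    linear_combination h₁ + h₂
  | succ n ih =>
    have hexp : q ^ (k.toNat + ((n : ℤ) + 1 - k).toNat) * gaussBinom q n (k - 1) =
        q ^ ((((n + 1 : ℕ) : ℤ) + 1 - k).toNat + (k - 1).toNat) * gaussBinom q n (k - 1) :=
      pow_mul_gaussBinom_congr q q (by omega)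
    rw [pow_add, pow_add] at hexp
    have ih' := ih (k - 1)
    rw [show (n : ℤ) + 1 - (k - 1) = ((n + 1 : ℕ) : ℤ) + 1 - k by push_cast; ring] at ih'
    linear_combination gaussBinom_succ q (n + 1) k + q ^ k.toNat * ih k + ih' -
      gaussBinom_succ q n k - q ^ (((n + 1 : ℕ) : ℤ) + 1 - k).toNat * gaussBinom_succ q n (k - 1) +
      hexp

theorem one_sub_pow_mul_gaussBinom (n : ℕ) (k : ℤ) :
    (1 - q ^ k.toNat) * gaussBinom q n k =
      (1 - q ^ ((n : ℤ) + 1 - k).toNat) * gaussBinom q n (k - 1) := by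
  linear_combination gaussBinom_succ q n k - gaussBinom_succ' q n k

theorem qPochhammer_mul_qPochhammer_mul_gaussBinom (j k : ℕ) :
    qPochhammer q j * qPochhammer q k * gaussBinom q (j + k) j = qPochhammer q (j + k) := by
  induction j generalizing k with
  | zero => simp [qPochhammer]
  | succ j ih =>
    have ratio := one_sub_pow_mul_gaussBinom q (j + 1 + k) ((j + 1 : ℕ) : ℤ)
    rw [show (((j + 1 + k : ℕ) : ℤ) + 1 - ((j + 1 : ℕ) : ℤ)).toNat = k + 1 by omega,
      show ((j + 1 : ℕ) : ℤ) - 1 = j by omega, Int.toNat_natCast] at ratio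
    have ih' := ih (k + 1)
    rw [show j + (k + 1) = j + 1 + k by ring] at ih'
    rw [← ih', qPochhammer_succ, qPochhammer_succ]
    linear_combination qPochhammer q j * qPochhammer q k * ratio

end GaussianBinomial

theorem sum_Icc_sub_add_one {M : Type*} [AddCommGroup M] (w : ℤ → M) {a b : ℤ}
    (h : a ≤ b + 1) :
    ∑ j ∈ Icc a b, (w j - w (j + 1)) = w a - w (b + 1) := by
  induction b, (show a - 1 ≤ b by omega) using Int.leInduction with
  | base => simp
  | succ b hb ih =>
    rw [← insert_Icc_right_eq_Icc_add_one (by omega), sum_insert (by simp), ih (by omega)]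
    abel

theorem sum_Icc_comp_add_one {M : Type*} [AddCommMonoid M] (f : ℤ → M) (a b : ℤ) :
    ∑ j ∈ Icc a b, f (j + 1) = ∑ j ∈ Icc (a + 1) (b + 1), f j := by
  rw [← map_add_right_Icc, sum_map]
  rfl

/-- `j (5j + 3)` is even and nonnegative, so neither the division nor `toNat` loses anything. -/
def thetaExp (j : ℤ) : ℕ := (j * (5 * j + 3) / 2).toNat

theorem two_mul_thetaExp (j : ℤ) : 2 * (thetaExp j : ℤ) = j * (5 * j + 3) := by
  obtain ⟨t, ht⟩ := Int.even_mul_succ_self j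
  have h : j * (5 * j + 3) = 2 * (2 * j ^ 2 + j + t) := by linear_combination ht
  have hpos : 0 ≤ 2 * j ^ 2 + j + t := by nlinarith
  rw [thetaExp, h, Int.mul_ediv_cancel_left _ two_ne_zero, Int.toNat_of_nonneg hpos]

theorem thetaExp_add_one (j : ℤ) : (thetaExp (j + 1) : ℤ) = thetaExp j + 5 * j + 4 := by
  linarith [two_mul_thetaExp j, two_mul_thetaExp (j + 1)]

theorem abs_le_thetaExp (j : ℤ) : |j| ≤ thetaExp j := by
  have h := two_mul_thetaExp j
  rcases abs_cases j with ⟨hj, _⟩ | ⟨hj, _⟩ <;> nlinarith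

@[simp]
theorem thetaExp_zero : thetaExp 0 = 0 := rfl

section Schur

variable {R : Type*} [CommRing R] (q : R)

def schurFermionic (n : ℕ) : R := ∑ k ∈ range (n + 1), q ^ (k ^ 2 + k) * gaussBinom q (n - k) k

def schurTerm (n : ℕ) (j : ℤ) : R :=
  j.negOnePow * q ^ thetaExp j * gaussBinom q (n + 1) ((n - 5 * j) / 2)

def schurBosonic (n : ℕ) : R := ∑ j ∈ Icc (-n : ℤ) n, schurTerm q n j

theorem schurBosonic_eq_sum_of_subset {n : ℕ} {s : Finset ℤ} (hs : Icc (-n : ℤ) n ⊆ s) :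
    schurBosonic q n = ∑ j ∈ s, schurTerm q n j := by
  refine sum_subset hs fun j _ hj => ?_
  rw [mem_Icc] at hj
  rw [schurTerm, gaussBinom_eq_zero q (by omega), mul_zero]

def schurWitness (n : ℕ) (j : ℤ) : R :=
  if 2 ∣ (n : ℤ) - 5 * j then
    j.negOnePow * q ^ (thetaExp j + ((n + 2 - 5 * j) / 2).toNat) *
      gaussBinom q (n + 1) ((n + 2 - 5 * j) / 2)
  else 0

theorem schurTerm_add_two (n : ℕ) (j : ℤ) :
    schurTerm q (n + 2) j - schurTerm q (n + 1) j - q ^ (n + 2) * schurTerm q n j =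
      schurWitness q n j - schurWitness q n (j + 1) := by
  obtain ⟨k, hk | hk⟩ : ∃ k : ℤ, n + 2 - 5 * j = 2 * k ∨ n + 2 - 5 * j = 2 * k + 1 :=
    ⟨(n + 2 - 5 * j) / 2, by omega⟩
  · have e₁ := gaussBinom_succ q (n + 2) k
    have e₂ := gaussBinom_succ' q (n + 1) k
    have hexp : q ^ k.toNat * q ^ (((n + 1 : ℕ) : ℤ) + 1 - k).toNat *
        gaussBinom q (n + 1) (k - 1) = q ^ (n + 2) * gaussBinom q (n + 1) (k - 1) := by
      rw [← pow_add]; exact pow_mul_gaussBinom_congr q q (by omega)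
    rw [schurTerm, schurTerm, schurTerm, schurWitness, schurWitness, if_pos (by omega),
      if_neg (by omega), show (((n + 2 : ℕ) : ℤ) - 5 * j) / 2 = k by omega,
      show (((n + 1 : ℕ) : ℤ) - 5 * j) / 2 = k - 1 by omega,
      show ((n : ℤ) - 5 * j) / 2 = k - 1 by omega, show ((n : ℤ) + 2 - 5 * j) / 2 = k by omega,
      pow_add]
    linear_combination (j.negOnePow : R) * q ^ thetaExp j * (e₁ + q ^ k.toNat * e₂ + hexp)
  · have e₁ := gaussBinom_succ' q (n + 2) k
    have e₂ := gaussBinom_succ q (n + 1) (k - 1)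
    have h₅ := thetaExp_add_one j
    have hexp₁ : q ^ (((n + 2 : ℕ) : ℤ) + 1 - k).toNat * q ^ (k - 1).toNat *
        gaussBinom q (n + 1) (k - 1) = q ^ (n + 2) * gaussBinom q (n + 1) (k - 1) := by
      rw [← pow_add]; exact pow_mul_gaussBinom_congr q q (by omega)
    have hexp₂ : q ^ thetaExp j * q ^ (((n + 2 : ℕ) : ℤ) + 1 - k).toNat *
        gaussBinom q (n + 1) (k - 1 - 1) =
        q ^ (thetaExp (j + 1) + (k - 1 - 1).toNat) * gaussBinom q (n + 1) (k - 1 - 1) := by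
      rw [← pow_add]; exact pow_mul_gaussBinom_congr q q (by omega)
    rw [schurTerm, schurTerm, schurTerm, schurWitness, schurWitness, if_neg (by omega),
      if_pos (by omega), show (((n + 2 : ℕ) : ℤ) - 5 * j) / 2 = k by omega,
      show (((n + 1 : ℕ) : ℤ) - 5 * j) / 2 = k by omega,
      show ((n : ℤ) - 5 * j) / 2 = k - 1 by omega,
      show ((n : ℤ) + 2 - 5 * (j + 1)) / 2 = k - 1 - 1 by omega, Int.negOnePow_succ]
    push_cast
    linear_combination (j.negOnePow : R) *
      (q ^ thetaExp j * (e₁ + q ^ (((n + 2 : ℕ) : ℤ) + 1 - k).toNat * e₂ + hexp₁) + hexp₂)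

theorem schurBosonic_add_two (n : ℕ) :
    schurBosonic q (n + 2) = schurBosonic q (n + 1) + q ^ (n + 2) * schurBosonic q n := by
  set s := Icc (-((n + 2 : ℕ) : ℤ)) (n + 2 : ℕ)
  have telescope : ∑ j ∈ s, (schurWitness q n j - schurWitness q n (j + 1)) = 0 := by
    rw [sum_Icc_sub_add_one _ (by omega), schurWitness, schurWitness,
      gaussBinom_eq_zero q (by omega), mul_zero, ite_self, ite_eq_right_iff.2 fun _ => by
        rw [gaussBinom_eq_zero q (by omega), mul_zero], sub_zero]
  rw [schurBosonic_eq_sum_of_subset q (subset_refl s),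
    schurBosonic_eq_sum_of_subset q (s := s) (Icc_subset_Icc (by omega) (by omega)),
    schurBosonic_eq_sum_of_subset q (s := s) (Icc_subset_Icc (by omega) (by omega)), mul_sum,
    ← sub_eq_zero, ← sub_sub, ← sum_sub_distrib, ← sum_sub_distrib, ← telescope]
  exact sum_congr rfl fun j _ => schurTerm_add_two q n j

theorem schurFermionic_add_two (n : ℕ) :
    schurFermionic q (n + 2) = schurFermionic q (n + 1) + q ^ (n + 2) * schurFermionic q n := by
  have pascal : ∀ k ∈ range (n + 2), q ^ (k ^ 2 + k) * gaussBinom q (n + 2 - k) k =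
      q ^ (k ^ 2 + k) * gaussBinom q (n + 1 - k) k + q ^ (k ^ 2 + k) *
        (q ^ (((n + 1 - k : ℕ) : ℤ) + 1 - k).toNat * gaussBinom q (n + 1 - k) (k - 1)) := by
    intro k hk
    rw [mem_range] at hk
    rw [show n + 2 - k = n + 1 - k + 1 by omega, gaussBinom_succ', mul_add]
  have shifted : ∑ k ∈ range (n + 2), q ^ (k ^ 2 + k) *
      (q ^ (((n + 1 - k : ℕ) : ℤ) + 1 - k).toNat * gaussBinom q (n + 1 - k) (k - 1)) =
      q ^ (n + 2) * schurFermionic q n := by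
    rw [sum_range_succ', gaussBinom_eq_zero q (by omega), mul_zero, mul_zero, add_zero,
      schurFermionic, mul_sum]
    refine sum_congr rfl fun i _ => ?_
    have hsq : (i + 1) ^ 2 = i ^ 2 + 2 * i + 1 := by ring
    rw [← mul_assoc, ← pow_add, ← mul_assoc, ← pow_add, show n + 1 - (i + 1) = n - i by omega,
      show ((i + 1 : ℕ) : ℤ) - 1 = i by omega]
    exact pow_mul_gaussBinom_congr q q (by omega)
  rw [schurFermionic, sum_range_succ, gaussBinom_eq_zero q (by omega), mul_zero, add_zero,
    sum_congr rfl pascal, sum_add_distrib, shifted]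
  rfl

theorem schurFermionic_eq_schurBosonic : ∀ n, schurFermionic q n = schurBosonic q n
  | 0 => by simp [schurFermionic, schurBosonic, schurTerm]
  | 1 => by
    simp [schurFermionic, schurBosonic, schurTerm, sum_range_succ, gaussBinom,
      show Icc (-1 : ℤ) 1 = {-1, 0, 1} by rfl]
  | n + 2 => by
    rw [schurFermionic_add_two, schurBosonic_add_two, schurFermionic_eq_schurBosonic n,
      schurFermionic_eq_schurBosonic (n + 1)]

end Schur

section JacobiTriple

variable {R : Type*} [CommRing R] (q : R)

def jacobiTripleTerm (m : ℕ) (j : ℤ) : R :=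
  j.negOnePow * q ^ thetaExp j * gaussBinom (q ^ 5) (2 * m) (m + j)

def jacobiTripleSum (m : ℕ) : R := ∑ j ∈ Icc (-m : ℤ) m, jacobiTripleTerm q m j

theorem jacobiTripleSum_eq_sum_of_subset {m : ℕ} {s : Finset ℤ} (hs : Icc (-m : ℤ) m ⊆ s) :
    jacobiTripleSum q m = ∑ j ∈ s, jacobiTripleTerm q m j := by
  refine sum_subset hs fun j _ hj => ?_
  rw [mem_Icc] at hj
  rw [jacobiTripleTerm, gaussBinom_eq_zero _ (by omega), mul_zero]

def jacobiTripleWitness (m : ℕ) (j : ℤ) : R :=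
  j.negOnePow * q ^ (thetaExp j + 5 * ((m : ℤ) + 1 - j).toNat) *
    gaussBinom (q ^ 5) (2 * m) (m + j - 1)

theorem jacobiTripleTerm_succ (m : ℕ) (j : ℤ) :
    jacobiTripleTerm q (m + 1) j - jacobiTripleTerm q m j +
        q ^ (5 * m + 1) * jacobiTripleTerm q m (j + 1) +
        (q ^ (5 * m + 4) - q ^ (10 * m + 5)) * jacobiTripleTerm q m j =
      jacobiTripleWitness q m j - jacobiTripleWitness q m (j + 1) := by
  set t := ((m : ℤ) + 1 - j).toNat
  set G := gaussBinom (q ^ 5) (2 * m)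
  have e₁ := gaussBinom_succ' (q ^ 5) (2 * m + 1) (m + j + 1)
  have e₂ := gaussBinom_succ (q ^ 5) (2 * m) (m + j + 1)
  have e₃ := gaussBinom_succ' (q ^ 5) (2 * m) (m + j)
  have ratio := one_sub_pow_mul_gaussBinom (q ^ 5) (2 * m) (m + j)
  rw [show (((2 * m + 1 : ℕ) : ℤ) + 1 - (m + j + 1)).toNat = t by omega,
    add_sub_cancel_right] at e₁
  rw [add_sub_cancel_right] at e₂
  rw [show (((2 * m : ℕ) : ℤ) + 1 - (m + j)).toNat = t by omega] at e₃ ratio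
  simp only [← pow_mul] at e₁ e₂ e₃ ratio
  have h₅ := thetaExp_add_one j
  have hexp₁ : q ^ thetaExp j * q ^ (5 * ((m : ℤ) + j + 1).toNat) * G (m + j + 1) =
      q ^ (5 * m + 1) * q ^ thetaExp (j + 1) * G (m + j + 1) := by
    rw [← pow_add, ← pow_add]; exact pow_mul_gaussBinom_congr _ _ (by omega)
  have hexp₂ : q ^ (5 * t) * q ^ (5 * ((m : ℤ) + j).toNat) * G (m + j) =
      q ^ (10 * m + 5) * G (m + j) := by
    rw [← pow_add]; exact pow_mul_gaussBinom_congr _ _ (by omega)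
  have hexp₃ : q ^ (5 * m + 4) * q ^ thetaExp j * G (m + j) =
      q ^ (thetaExp (j + 1) + 5 * ((m : ℤ) + 1 - (j + 1)).toNat) * G (m + j) := by
    rw [← pow_add]; exact pow_mul_gaussBinom_congr _ _ (by omega)
  rw [jacobiTripleTerm, jacobiTripleTerm, jacobiTripleTerm, jacobiTripleWitness,
    jacobiTripleWitness, show ((m + 1 : ℕ) : ℤ) + j = m + j + 1 by push_cast; ring,
    show 2 * (m + 1) = 2 * m + 1 + 1 by ring, show (m : ℤ) + (j + 1) - 1 = m + j by ring,
    show (m : ℤ) + (j + 1) = m + j + 1 by ring, pow_add q (thetaExp j), Int.negOnePow_succ]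
  push_cast
  linear_combination (j.negOnePow : R) * (q ^ thetaExp j * (e₁ + e₂ + q ^ (5 * t) * e₃ +
    q ^ (5 * t) * ratio + hexp₂) + hexp₁ + hexp₃)

theorem jacobiTripleSum_succ (m : ℕ) :
    jacobiTripleSum q (m + 1) =
      (1 - q ^ (1 + 5 * m)) * (1 - q ^ (4 + 5 * m)) * jacobiTripleSum q m := by
  set s := Icc (-((m + 1 : ℕ) : ℤ)) (m + 1 : ℕ)
  have telescope :
      ∑ j ∈ s, (jacobiTripleWitness q m j - jacobiTripleWitness q m (j + 1)) = 0 := by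
    rw [sum_Icc_sub_add_one _ (by omega), jacobiTripleWitness, jacobiTripleWitness,
      gaussBinom_eq_zero _ (by omega), gaussBinom_eq_zero _ (by omega), mul_zero, mul_zero,
      sub_zero]
  have shift : ∑ j ∈ s, jacobiTripleTerm q m (j + 1) = jacobiTripleSum q m := by
    rw [sum_Icc_comp_add_one]
    exact (jacobiTripleSum_eq_sum_of_subset q (Icc_subset_Icc (by omega) (by omega))).symm
  have hs : jacobiTripleSum q m = ∑ j ∈ s, jacobiTripleTerm q m j :=
    jacobiTripleSum_eq_sum_of_subset q (Icc_subset_Icc (by omega) (by omega))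
  have key := sum_congr rfl fun j (_ : j ∈ s) => jacobiTripleTerm_succ q m j
  rw [sum_add_distrib, sum_add_distrib, sum_sub_distrib, ← mul_sum, ← mul_sum, shift, ← hs,
    telescope] at key
  rw [jacobiTripleSum_eq_sum_of_subset q (m := m + 1) (subset_refl s)]
  linear_combination key

theorem jacobiTripleSum_eq_prod (m : ℕ) :
    jacobiTripleSum q m = ∏ i ∈ range m, (1 - q ^ (1 + 5 * i)) * (1 - q ^ (4 + 5 * i)) := by
  induction m with
  | zero => simp [jacobiTripleSum, jacobiTripleTerm]
  | succ m ih => rw [jacobiTripleSum_succ, ih, prod_range_succ, mul_comm]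

end JacobiTriple

section Truncation

variable {A : Type*} [CommRing A] {I : Ideal A}

theorem sum_modEq_sum_of_subset {ι : Type*} {s t : Finset ι} (hst : s ⊆ t) {f : ι → A}
    (h : ∀ i ∈ t, i ∉ s → f i ∈ I) : ∑ i ∈ t, f i ≡ ∑ i ∈ s, f i [SMOD I] := by
  classical
  rw [SModEq.sub_mem, ← sum_sdiff hst, add_sub_cancel_right]
  exact I.sum_mem fun i hi => h i (mem_sdiff.1 hi).1 (mem_sdiff.1 hi).2

theorem prod_modEq_prod_of_subset {ι : Type*} {s t : Finset ι} (hst : s ⊆ t) {f : ι → A}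
    (h : ∀ i ∈ t, i ∉ s → f i ≡ 1 [SMOD I]) : ∏ i ∈ t, f i ≡ ∏ i ∈ s, f i [SMOD I] := by
  classical
  rw [← prod_sdiff hst]
  simpa using (SModEq.prod fun i hi => h i (mem_sdiff.1 hi).1 (mem_sdiff.1 hi).2).mul
    (SModEq.refl (∏ i ∈ s, f i))

theorem one_sub_modEq_one {x : A} (hx : x ∈ I) : 1 - x ≡ 1 [SMOD I] := by
  rwa [SModEq.sub_mem, sub_sub_cancel_left, neg_mem_iff]

theorem qPochhammer_modEq {q : A} {m m' : ℕ} (hq : q ^ (m + 1) ∈ I) (h : m ≤ m') :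
    qPochhammer q m' ≡ qPochhammer q m [SMOD I] :=
  prod_modEq_prod_of_subset (range_subset_range.2 h) fun i _ hi =>
    one_sub_modEq_one (I.pow_mem_of_pow_mem hq (by simp at hi; omega))

theorem modEq_of_isUnit_mul {u a b : A} (hu : IsUnit u) (h : u * a ≡ u * b [SMOD I]) :
    a ≡ b [SMOD I] := by
  obtain ⟨v, hv⟩ := hu.exists_left_inv
  simpa [← mul_assoc, hv] using (SModEq.refl v).mul h

theorem qPochhammer_mul_gaussBinom_modEq {q : A} (j k : ℕ) (hq : q ^ (k + 1) ∈ I)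
    (hu : IsUnit (qPochhammer q k)) : qPochhammer q j * gaussBinom q (j + k) j ≡ 1 [SMOD I] := by
  refine modEq_of_isUnit_mul hu ?_
  rw [← mul_assoc, mul_comm (qPochhammer q k), qPochhammer_mul_qPochhammer_mul_gaussBinom, mul_one,
    add_comm]
  exact qPochhammer_modEq hq (Nat.le_add_right k j)

def thetaSum (q : A) (N : ℕ) : A := ∑ j ∈ Icc (-N : ℤ) N, j.negOnePow * q ^ thetaExp j

/-- Only the terms with `|j| ≤ N` matter modulo `I`, since `q ^ thetaExp j ∈ I` for the others. -/
theorem sum_modEq_thetaSum_mul {q : A} {N : ℕ} (hq : q ^ (N + 1) ∈ I) {s : Finset ℤ}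
    (hs : Icc (-N : ℤ) N ⊆ s) {g : ℤ → A} {y : A} (hg : ∀ j ∈ Icc (-N : ℤ) N, g j ≡ y [SMOD I]) :
    ∑ j ∈ s, j.negOnePow * q ^ thetaExp j * g j ≡ thetaSum q N * y [SMOD I] := by
  rw [thetaSum, sum_mul]
  refine (sum_modEq_sum_of_subset hs fun j _ hj => ?_).trans
    (SModEq.sum fun j hj => (SModEq.refl _).mul (hg j hj))
  have habs := abs_le_thetaExp j
  rw [mem_Icc] at hj
  refine I.mul_mem_right _ (I.mul_mem_left _ (I.pow_mem_of_pow_mem hq ?_))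
  rcases abs_cases j with ⟨h, _⟩ | ⟨h, _⟩ <;> omega

end Truncation

section PowerSeries

variable {K : Type*} [Field K] {I : Ideal K⟦X⟧} {q : K⟦X⟧} {N : ℕ}

theorem coeff_eq_of_modEq {f g : K⟦X⟧} (h : f ≡ g [SMOD Ideal.span {(X : K⟦X⟧) ^ (N + 1)}]) :
    coeff N f = coeff N g := by
  rw [SModEq.sub_mem, Ideal.mem_span_singleton, X_pow_dvd_iff] at h
  simpa [sub_eq_zero] using h N (by omega)

theorem modEq_inv_of_mul_modEq_one {f g : K⟦X⟧} (hf : constantCoeff f ≠ 0)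
    (h : f * g ≡ 1 [SMOD I]) : g ≡ f⁻¹ [SMOD I] := by
  simpa [← mul_assoc, PowerSeries.inv_mul_cancel f hf] using (SModEq.refl f⁻¹).mul h

theorem inv_modEq_inv {f g : K⟦X⟧} (hf : constantCoeff f ≠ 0) (hg : constantCoeff g ≠ 0)
    (h : f ≡ g [SMOD I]) : f⁻¹ ≡ g⁻¹ [SMOD I] := by
  refine modEq_inv_of_mul_modEq_one hg ?_
  simpa [PowerSeries.mul_inv_cancel f hf] using h.symm.mul (SModEq.refl f⁻¹)

theorem constantCoeff_qPochhammer (hq0 : constantCoeff q = 0) (m : ℕ) :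
    constantCoeff (qPochhammer q m) = 1 := by
  simp [qPochhammer, map_prod, hq0]

theorem gaussBinom_modEq_inv (hq0 : constantCoeff q = 0) (hq : q ^ (N + 1) ∈ I) {j n : ℕ}
    (h : j + N ≤ n) : gaussBinom q n j ≡ (qPochhammer q j)⁻¹ [SMOD I] := by
  obtain ⟨k, rfl⟩ := Nat.exists_eq_add_of_le (le_trans (Nat.le_add_right j N) h)
  refine modEq_inv_of_mul_modEq_one (by simp [constantCoeff_qPochhammer hq0])
    (qPochhammer_mul_gaussBinom_modEq j k (I.pow_mem_of_pow_mem hq (by omega)) ?_)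
  rw [isUnit_iff_constantCoeff, constantCoeff_qPochhammer hq0]
  exact isUnit_one

theorem gaussBinom_modEq_inv_qPochhammer (hq0 : constantCoeff q = 0) (hq : q ^ (N + 1) ∈ I)
    {n m : ℕ} {k : ℤ} (hk : N ≤ k) (hn : k + N ≤ n) (hm : N ≤ m) :
    gaussBinom q n k ≡ (qPochhammer q m)⁻¹ [SMOD I] := by
  lift k to ℕ using (by omega)
  refine (gaussBinom_modEq_inv hq0 hq (by omega)).trans
    (inv_modEq_inv (by simp [constantCoeff_qPochhammer hq0])
      (by simp [constantCoeff_qPochhammer hq0]) ?_)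
  exact (qPochhammer_modEq (I.pow_mem_of_pow_mem hq (by omega)) (by omega)).trans
    (qPochhammer_modEq (I.pow_mem_of_pow_mem hq (by omega)) hm).symm

theorem schurFermionic_modEq (hq0 : constantCoeff q = 0) (hq : q ^ (N + 1) ∈ I) {M : ℕ}
    (hM : 3 * N ≤ M) :
    schurFermionic q M ≡ ∑ k ∈ range (N + 1), q ^ (k ^ 2 + k) * (qPochhammer q k)⁻¹ [SMOD I] := by
  refine (sum_modEq_sum_of_subset (range_subset_range.2 (by omega)) fun k _ hk => ?_).trans
    (SModEq.sum fun k hk => (SModEq.refl _).mul (gaussBinom_modEq_inv hq0 hq ?_))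
  · rw [mem_range, not_lt] at hk
    exact I.mul_mem_right _ (I.pow_mem_of_pow_mem hq (by nlinarith))
  · rw [mem_range] at hk
    omega

theorem schurBosonic_modEq (hq0 : constantCoeff q = 0) (hq : q ^ (N + 1) ∈ I) {M : ℕ}
    (hM : 7 * N ≤ M) : schurBosonic q M ≡ thetaSum q N * (qPochhammer q M)⁻¹ [SMOD I] :=
  sum_modEq_thetaSum_mul hq (Icc_subset_Icc (by omega) (by omega)) fun j hj => by
    rw [mem_Icc] at hj
    exact gaussBinom_modEq_inv_qPochhammer hq0 hq (by omega) (by omega) (by omega)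

theorem thetaSum_modEq (hq0 : constantCoeff q = 0) (hq : q ^ (N + 1) ∈ I) {L : ℕ} (hL : 2 * N ≤ L) :
    thetaSum q N ≡ (∏ i ∈ range L, (1 - q ^ (1 + 5 * i)) * (1 - q ^ (4 + 5 * i))) *
      qPochhammer (q ^ 5) L [SMOD I] := by
  have hq0' : constantCoeff (q ^ 5) = 0 := by simp [hq0]
  have hq' : (q ^ 5) ^ (N + 1) ∈ I := by
    rw [← pow_mul, mul_comm, pow_mul]
    exact I.pow_mem_of_mem hq 5 (by norm_num)
  have hJ : jacobiTripleSum q L ≡ thetaSum q N * (qPochhammer (q ^ 5) L)⁻¹ [SMOD I] :=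
    sum_modEq_thetaSum_mul hq (Icc_subset_Icc (by omega) (by omega)) fun j hj => by
      rw [mem_Icc] at hj
      exact gaussBinom_modEq_inv_qPochhammer hq0' hq' (by omega) (by omega) (by omega)
  rw [jacobiTripleSum_eq_prod] at hJ
  calc thetaSum q N = thetaSum q N * (qPochhammer (q ^ 5) L)⁻¹ * qPochhammer (q ^ 5) L := by
        rw [mul_assoc, PowerSeries.inv_mul_cancel _ (by simp [constantCoeff_qPochhammer hq0']),
          mul_one]
    _ ≡ _ [SMOD I] := hJ.symm.mul (SModEq.refl _)

end PowerSeries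

end

/-- The second Rogers–Ramanujan identity, stated coefficientwise as formal power series:
`Σ_{n≥0} q^{n²+n}/(q;q)_n = 1/((q²;q⁵)_∞ (q³;q⁵)_∞)`. -/
theorem rogers_ramanujan_second :
    ∀ N : ℕ,
      (PowerSeries.coeff (R := ℚ) N)
          (∑ n ∈ Finset.range (N + 1),
            (X : PowerSeries ℚ) ^ (n ^ 2 + n) * (∏ j ∈ Finset.range n, (1 - (X : PowerSeries ℚ) ^ (j + 1)))⁻¹) =
        (PowerSeries.coeff (R := ℚ) N)
          (((∏ k ∈ Finset.range (N + 1), (1 - (X : PowerSeries ℚ) ^ (2 + 5 * k))) *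
            (∏ k ∈ Finset.range (N + 1), (1 - (X : PowerSeries ℚ) ^ (3 + 5 * k))))⁻¹) := by
  intro N
  set I : Ideal ℚ⟦X⟧ := Ideal.span {X ^ (N + 1)}
  have hX0 : constantCoeff (X : ℚ⟦X⟧) = 0 := constantCoeff_X
  have hX : (X : ℚ⟦X⟧) ^ (N + 1) ∈ I := Ideal.subset_span rfl
  set L := 2 * N + 1
  have hsum : ∑ n ∈ range (N + 1), X ^ (n ^ 2 + n) * (qPochhammer X n)⁻¹ ≡
      thetaSum X N * (qPochhammer X (5 * L))⁻¹ [SMOD I] := by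
    refine (schurFermionic_modEq hX0 hX (M := 5 * L) (by omega)).symm.trans ?_
    rw [schurFermionic_eq_schurBosonic]
    exact schurBosonic_modEq hX0 hX (by omega)
  have htail : ∀ b, ∏ i ∈ range (N + 1), (1 - (X : ℚ⟦X⟧) ^ (b + 5 * i)) ≡
      ∏ i ∈ range L, (1 - X ^ (b + 5 * i)) [SMOD I] := fun b =>
    (prod_modEq_prod_of_subset (range_subset_range.2 (by omega)) fun i _ hi =>
      one_sub_modEq_one (I.pow_mem_of_pow_mem hX (by simp at hi; omega))).symm
  apply coeff_eq_of_modEq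
  refine modEq_inv_of_mul_modEq_one (by simp) ?_
  calc _ ≡ (∏ i ∈ range L, (1 - X ^ (2 + 5 * i))) * (∏ i ∈ range L, (1 - X ^ (3 + 5 * i))) *
        ((∏ i ∈ range L, (1 - X ^ (1 + 5 * i)) * (1 - X ^ (4 + 5 * i))) *
          qPochhammer (X ^ 5) L * (qPochhammer X (5 * L))⁻¹) [SMOD I] :=
        ((htail 2).mul (htail 3)).mul
          (hsum.trans ((thetaSum_modEq hX0 hX (by omega)).mul (SModEq.refl _)))
    _ = qPochhammer X (5 * L) * (qPochhammer X (5 * L))⁻¹ := by rw [qPochhammer_five_mul]; ring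
    _ = 1 := PowerSeries.mul_inv_cancel _ (by simp [constantCoeff_qPochhammer hX0])
end

section
/- For m = 3k+1 with k ≥ 2, any ρ, σ ∈ ℤ^{k-1} and any 1 ≤ i ≤ k-2, the recurrence R_1 holds: S_m(ρ|σ) - S_m(ρ + δ_i - δ_{i+1} | σ) - z·q^{i + Σ_{j=1}^i ρ_j} · S_m(ρ + 2Σ_{j=1}^i δ_j | σ - Σ_{j=1}^i δ_j) = 0, as an identity of formal power series in q and z. -/
noncomputable section
open PowerSeries

/-- `(q;q)_n = ∏_{j=1}^n (1-q^j)`. -/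
def poch (n : ℕ) : PowerSeries ℚ := ∏ j ∈ Finset.range n, (1 - (X : PowerSeries ℚ) ^ (j + 1))

/-- `1/(q;q)_n`. -/
def pochInv (n : ℕ) : PowerSeries ℚ := (poch n)⁻¹

/-- Coefficient extraction at an integer exponent (`0` for negative exponents). -/
def coeffZ (b : ℤ) (f : PowerSeries ℚ) : ℚ :=
  if 0 ≤ b then PowerSeries.coeff b.toNat f else 0

/-- Pairs `(r,s)` of weakly decreasing tuples `r_1 ≥ … ≥ r_{K} ≥ 0` (supported on the first `K`
coordinates, 0-indexed). -/
def Tup (K : ℕ) : Set ((ℕ → ℕ) × (ℕ → ℕ)) :=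
  {p | (∀ t, p.1 (t + 1) ≤ p.1 t) ∧ (∀ t, K ≤ t → p.1 t = 0) ∧
       (∀ t, p.2 (t + 1) ≤ p.2 t) ∧ (∀ t, K ≤ t → p.2 t = 0)}

/-- The exponent `Σ_{t=1}^{K} (r_t² - r_t s_t + s_t² + ρ_t r_t + σ_t s_t)`. -/
def Equad (K : ℕ) (ρ σ : ℕ → ℤ) (r s : ℕ → ℕ) : ℤ :=
  ∑ t ∈ Finset.range K,
    ((r t : ℤ) ^ 2 - (r t : ℤ) * (s t : ℤ) + (s t : ℤ) ^ 2 + ρ t * (r t : ℤ) + σ t * (s t : ℤ))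

/-- `∏_{t=1}^{K-1} 1/((q;q)_{r_t - r_{t+1}} (q;q)_{s_t - s_{t+1}})`. -/
def Dser (K : ℕ) (r s : ℕ → ℕ) : PowerSeries ℚ :=
  ∏ t ∈ Finset.range (K - 1), (pochInv (r t - r (t + 1)) * pochInv (s t - s (t + 1)))

/-- Tail factor for `m = 3k-1`:
`q^{2 r_K s_K} / ((q;q)_{r_K} (q;q)_{s_K} (q;q)_{r_K+s_K+1})`. -/
def tailm1 (a b : ℕ) : PowerSeries ℚ :=
  (X : PowerSeries ℚ) ^ (2 * a * b) * pochInv a * pochInv b * pochInv (a + b + 1)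

/-- The coefficient of `z^a q^b` in the Kanade–Russell series `S_m(z; ρ|σ)` with the given
tail factor (`K = k-1`); the sum over tuples has finite support for each fixed `(a,b)`. -/
def Scoef (K : ℕ) (tail : ℕ → ℕ → PowerSeries ℚ) (ρ σ : ℕ → ℤ) (a : ℕ) (b : ℤ) : ℚ :=
  ∑ᶠ p ∈ {p ∈ Tup K | p.1 0 = a},
    coeffZ (b - Equad K ρ σ p.1 p.2) (Dser K p.1 p.2 * tail (p.1 (K - 1)) (p.2 (K - 1)))

/-- Tail factor for `m = 3k+1`: `1/((q;q)_{r_K} (q;q)_{s_K} (q;q)_{r_K+s_K+1})`. -/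
def tailp1 (a b : ℕ) : PowerSeries ℚ := pochInv a * pochInv b * pochInv (a + b + 1)

/-!
For each pair `(r, s)` the summands of `S(ρ|σ)` and `S(ρ + δ_i - δ_{i+1}|σ)` differ by the factor
`q^{r_i - r_{i+1}}`, so their difference carries `1 - q^{r_i - r_{i+1}}`. This vanishes when
`r_i = r_{i+1}`, and otherwise turns `1/(q;q)_{r_i - r_{i+1}}` into `1/(q;q)_{r_i - r_{i+1} - 1}`,
the corresponding factor of the pair obtained by lowering `r_1, …, r_i` by one. That lowering is a
bijection onto all pairs with `r_1` decreased by one, and it lowers the exponent by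
`i + Σ_{j ≤ i} ρ_j` once `ρ` and `σ` are replaced by `ρ + 2 Σ_{j ≤ i} δ_j` and
`σ - Σ_{j ≤ i} δ_j`; summing gives the recurrence. Since `i < K`, the lowering never touches
`r_K`, so the tail factor plays no role.
-/

lemma pochInv_succ (n : ℕ) :
    (1 - (X : PowerSeries ℚ) ^ (n + 1)) * pochInv (n + 1) = pochInv n := by
  have hunit : constantCoeff (1 - (X : PowerSeries ℚ) ^ (n + 1)) ≠ 0 := by simp
  rw [pochInv, poch, Finset.prod_range_succ, ← poch, PowerSeries.mul_inv_rev, ← mul_assoc,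
    PowerSeries.mul_inv_cancel _ hunit, one_mul, pochInv]

lemma coeffZ_sub (b : ℤ) (f g : PowerSeries ℚ) :
    coeffZ b (f - g) = coeffZ b f - coeffZ b g := by
  unfold coeffZ
  split_ifs <;> simp

lemma coeffZ_X_pow_mul (n : ℕ) (b : ℤ) (f : PowerSeries ℚ) :
    coeffZ b ((X : PowerSeries ℚ) ^ n * f) = coeffZ (b - n) f := by
  unfold coeffZ
  rw [PowerSeries.coeff_X_pow_mul']
  split_ifs <;> first | rfl | omega | rw [show b.toNat - n = (b - n).toNat by omega]

lemma coeffZ_eq_zero_of_neg {b : ℤ} (hb : b < 0) (f : PowerSeries ℚ) : coeffZ b f = 0 :=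
  if_neg (not_le.mpr hb)

lemma finsum_mem_sub_distrib' {α M : Type*} [AddCommGroup M] {f g : α → M} {s : Set α}
    (hf : (s ∩ Function.support f).Finite) (hg : (s ∩ Function.support g).Finite) :
    ∑ᶠ x ∈ s, (f x - g x) = ∑ᶠ x ∈ s, f x - ∑ᶠ x ∈ s, g x := by
  rw [← Set.support_indicator] at hf hg
  simp only [finsum_mem_def, Set.indicator_sub]
  exact finsum_sub_distrib hf hg

lemma finite_setOf_bounded_tuple (K A : ℕ) :
    {f : ℕ → ℕ | (∀ t, f t ≤ A) ∧ ∀ t, K ≤ t → f t = 0}.Finite := by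
  refine Set.Finite.of_finite_image (f := fun f (t : Fin K) => f t) ?_ ?_
  · refine (Set.Finite.pi (t := fun _ => Set.Iic A) fun _ => Set.finite_Iic A).subset ?_
    rintro _ ⟨f, hf, rfl⟩ t -
    exact hf.1 t
  · intro f hf g hg hfg
    funext t
    by_cases ht : t < K
    · exact congrFun hfg ⟨t, ht⟩
    · rw [hf.2 t (not_lt.mp ht), hg.2 t (not_lt.mp ht)]

lemma sub_le_equad_term {a r s ρ σ : ℤ} (hr₀ : 0 ≤ r) (hra : r ≤ a) (hs : 0 ≤ s) :
    s - ((a + |σ| + 1) ^ 2 + |ρ| * a) ≤ r ^ 2 - r * s + s ^ 2 + ρ * r + σ * s := by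
  have hc : 0 ≤ a + |σ| + 1 := by linarith [abs_nonneg σ]
  nlinarith [sq_nonneg (s - (a + |σ| + 1)), mul_nonneg hc hs, mul_le_mul_of_nonneg_right hra hs,
    mul_le_mul_of_nonneg_left hra (abs_nonneg ρ), mul_le_mul_of_nonneg_right (neg_abs_le ρ) hr₀,
    mul_le_mul_of_nonneg_right (neg_abs_le σ) hs]

/-- Given `r_1 = a`, the quadratic form is coercive in `s`. -/
lemma finite_setOf_Equad_le (K a : ℕ) (b : ℤ) (ρ σ : ℕ → ℤ) :
    {p : (ℕ → ℕ) × (ℕ → ℕ) | p ∈ Tup K ∧ p.1 0 = a ∧ Equad K ρ σ p.1 p.2 ≤ b}.Finite := by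
  set M : ℤ := ∑ t ∈ Finset.range K, (((a : ℤ) + |σ t| + 1) ^ 2 + |ρ t| * a)
  refine ((finite_setOf_bounded_tuple K a).prod
    (finite_setOf_bounded_tuple K (b + M).toNat)).subset ?_
  rintro ⟨r, s⟩ ⟨⟨hr, hrK, -, hsK⟩, hr0, hE⟩
  dsimp only at hr hrK hsK hr0 hE
  have hra : ∀ t, r t ≤ a := fun t => hr0 ▸ antitone_nat_of_succ_le hr (Nat.zero_le t)
  refine ⟨⟨hra, hrK⟩, fun u => show s u ≤ (b + M).toNat from ?_, hsK⟩
  by_cases hu : u < K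
  · have hsum : ∑ t ∈ Finset.range K, ((s t : ℤ) - (((a : ℤ) + |σ t| + 1) ^ 2 + |ρ t| * a))
        ≤ Equad K ρ σ r s :=
      Finset.sum_le_sum fun t _ =>
        sub_le_equad_term (Int.natCast_nonneg _) (by exact_mod_cast hra t) (Int.natCast_nonneg _)
    have hsu : (s u : ℤ) ≤ ∑ t ∈ Finset.range K, (s t : ℤ) :=
      Finset.single_le_sum (fun t _ => Int.natCast_nonneg (s t)) (Finset.mem_range.mpr hu)
    rw [Finset.sum_sub_distrib] at hsum
    omega
  · simp [hsK u (not_lt.mp hu)]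

def scoefTerm (K : ℕ) (tail : ℕ → ℕ → PowerSeries ℚ) (ρ σ : ℕ → ℤ) (b : ℤ)
    (p : (ℕ → ℕ) × (ℕ → ℕ)) : ℚ :=
  coeffZ (b - Equad K ρ σ p.1 p.2) (Dser K p.1 p.2 * tail (p.1 (K - 1)) (p.2 (K - 1)))

lemma Scoef_eq_finsum (K : ℕ) (tail : ℕ → ℕ → PowerSeries ℚ) (ρ σ : ℕ → ℤ) (a : ℕ) (b : ℤ) :
    Scoef K tail ρ σ a b = ∑ᶠ p ∈ {p ∈ Tup K | p.1 0 = a}, scoefTerm K tail ρ σ b p :=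
  rfl

lemma finite_inter_support_scoefTerm (K : ℕ) (tail : ℕ → ℕ → PowerSeries ℚ) (ρ σ : ℕ → ℤ)
    (a : ℕ) (b : ℤ) :
    ({p ∈ Tup K | p.1 0 = a} ∩ Function.support (scoefTerm K tail ρ σ b)).Finite := by
  refine (finite_setOf_Equad_le K a b ρ σ).subset ?_
  rintro p ⟨⟨hp, hp0⟩, hne⟩
  refine ⟨hp, hp0, not_lt.mp fun hlt => hne ?_⟩
  exact coeffZ_eq_zero_of_neg (by omega) _

lemma Equad_sub_Equad (K : ℕ) (ρ ρ' σ σ' : ℕ → ℤ) (r s : ℕ → ℕ) :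
    Equad K ρ' σ' r s - Equad K ρ σ r s =
      ∑ t ∈ Finset.range K, ((ρ' t - ρ t) * r t + (σ' t - σ t) * s t) := by
  rw [Equad, Equad, ← Finset.sum_sub_distrib]
  exact Finset.sum_congr rfl fun t _ => by ring

/-- `ρ + δ_i - δ_{i+1}` in the paper's 1-based indexing. -/
def shiftRho (i : ℕ) (ρ : ℕ → ℤ) : ℕ → ℤ :=
  fun t => if t = i - 1 then ρ t + 1 else if t = i then ρ t - 1 else ρ t

lemma Equad_shiftRho {K i : ℕ} (hi : 1 ≤ i) (hiK : i < K) (ρ σ : ℕ → ℤ) (r s : ℕ → ℕ) :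
    Equad K (shiftRho i ρ) σ r s = Equad K ρ σ r s + ((r (i - 1) : ℤ) - r i) := by
  have hterm : ∀ t, (shiftRho i ρ t - ρ t) * r t + (σ t - σ t) * s t =
      (if t = i - 1 then (r t : ℤ) else 0) - (if t = i then (r t : ℤ) else 0) := by
    intro t
    unfold shiftRho
    split_ifs <;> omega
  rw [← sub_eq_iff_eq_add', Equad_sub_Equad, Finset.sum_congr rfl fun t _ => hterm t,
    Finset.sum_sub_distrib, Finset.sum_ite_eq', Finset.sum_ite_eq',
    if_pos (Finset.mem_range.mpr (by omega)), if_pos (Finset.mem_range.mpr hiK)]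

def lowerPrefix (i : ℕ) (r : ℕ → ℕ) : ℕ → ℕ := fun t => if t < i then r t - 1 else r t

def raisePrefix (i : ℕ) (r : ℕ → ℕ) : ℕ → ℕ := fun t => if t < i then r t + 1 else r t

lemma Equad_lowerPrefix {K i : ℕ} (hiK : i ≤ K) (ρ σ : ℕ → ℤ) {r : ℕ → ℕ}
    (hr : ∀ t < i, 1 ≤ r t) (s : ℕ → ℕ) :
    Equad K (fun t => if t < i then ρ t + 2 else ρ t) (fun t => if t < i then σ t - 1 else σ t)
        (lowerPrefix i r) s =
      Equad K ρ σ r s - ((i : ℤ) + ∑ j ∈ Finset.range i, ρ j) := by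
  have hterm : ∀ t ∈ Finset.range K,
      ((lowerPrefix i r t : ℕ) : ℤ) ^ 2 - (lowerPrefix i r t : ℤ) * (s t : ℤ) + (s t : ℤ) ^ 2
          + (if t < i then ρ t + 2 else ρ t) * (lowerPrefix i r t : ℤ)
          + (if t < i then σ t - 1 else σ t) * (s t : ℤ) =
        ((r t : ℤ) ^ 2 - (r t : ℤ) * (s t : ℤ) + (s t : ℤ) ^ 2 + ρ t * (r t : ℤ)
          + σ t * (s t : ℤ)) - (if t < i then 1 + ρ t else 0) := by
    intro t _
    unfold lowerPrefix
    split_ifs with ht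
    · rw [Nat.cast_sub (hr t ht)]
      ring
    · ring
  obtain ⟨d, rfl⟩ := Nat.exists_eq_add_of_le hiK
  rw [Equad, Finset.sum_congr rfl hterm, Finset.sum_sub_distrib, Equad]
  congr 1
  rw [Finset.sum_range_add, Finset.sum_congr rfl fun t ht => if_pos (Finset.mem_range.mp ht),
    Finset.sum_congr rfl fun t _ => if_neg (by omega), Finset.sum_const_zero, add_zero,
    Finset.sum_add_distrib]
  simp

lemma one_le_of_lt_of_antitone {r : ℕ → ℕ} (hr : Antitone r) {i : ℕ} (hlt : r i < r (i - 1)) :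
    ∀ t < i, 1 ≤ r t :=
  fun t ht => lt_of_le_of_lt (Nat.zero_le _) (hlt.trans_le (hr (by omega)))

lemma Dser_lowerPrefix {K i : ℕ} (hi : 1 ≤ i) (hiK : i < K) {r : ℕ → ℕ} (hr : Antitone r)
    (hlt : r i < r (i - 1)) (s : ℕ → ℕ) :
    Dser K (lowerPrefix i r) s = (1 - (X : PowerSeries ℚ) ^ (r (i - 1) - r i)) * Dser K r s := by
  have hr1 := one_le_of_lt_of_antitone hr hlt
  have hmem : i - 1 ∈ Finset.range (K - 1) := Finset.mem_range.mpr (by omega)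
  have hgap : lowerPrefix i r (i - 1) - lowerPrefix i r (i - 1 + 1) = r (i - 1) - r i - 1 := by
    simp only [lowerPrefix, Nat.sub_add_cancel hi, if_pos (Nat.sub_lt hi one_pos), lt_irrefl,
      if_false]
    omega
  have hrest : ∀ t ∈ (Finset.range (K - 1)).erase (i - 1),
      lowerPrefix i r t - lowerPrefix i r (t + 1) = r t - r (t + 1) := by
    intro t ht
    have htne := Finset.ne_of_mem_erase ht
    have hmono := hr (Nat.le_succ t)
    unfold lowerPrefix
    split_ifs with h1 h2 <;> first | omega | have := hr1 (t + 1) h2; omega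
  obtain ⟨n, hn⟩ : ∃ n, r (i - 1) - r i = n + 1 := ⟨r (i - 1) - r i - 1, by omega⟩
  unfold Dser
  rw [← Finset.mul_prod_erase _ _ hmem, ← Finset.mul_prod_erase _ _ hmem,
    Finset.prod_congr rfl fun t ht => by rw [hrest t ht], hgap, Nat.sub_add_cancel hi, hn,
    Nat.add_sub_cancel, ← pochInv_succ n]
  ring

lemma lowerPrefix_of_le {i t : ℕ} (r : ℕ → ℕ) (ht : i ≤ t) : lowerPrefix i r t = r t :=
  if_neg (not_lt.mpr ht)

lemma scoefTerm_sub_scoefTerm_shiftRho {K i : ℕ} (hi : 1 ≤ i) (hiK : i < K)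
    (tail : ℕ → ℕ → PowerSeries ℚ) (ρ σ : ℕ → ℤ) (b : ℤ) {p : (ℕ → ℕ) × (ℕ → ℕ)}
    (hp : p ∈ Tup K) :
    scoefTerm K tail ρ σ b p - scoefTerm K tail (shiftRho i ρ) σ b p =
      if p.1 (i - 1) = p.1 i then 0
      else scoefTerm K tail (fun t => if t < i then ρ t + 2 else ρ t)
        (fun t => if t < i then σ t - 1 else σ t) (b - ((i : ℤ) + ∑ j ∈ Finset.range i, ρ j))
        (Prod.map (lowerPrefix i) id p) := by
  obtain ⟨r, s⟩ := p
  have hr : Antitone r := antitone_nat_of_succ_le hp.1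
  unfold scoefTerm
  dsimp only [Prod.map_fst, Prod.map_snd, id_eq]
  rw [Equad_shiftRho hi hiK]
  split_ifs with heq
  · rw [heq, sub_self, add_zero, sub_self]
  have hlt : r i < r (i - 1) := lt_of_le_of_ne (hr (Nat.sub_le i 1)) (Ne.symm heq)
  rw [Equad_lowerPrefix hiK.le ρ σ (one_le_of_lt_of_antitone hr hlt),
    Dser_lowerPrefix hi hiK hr hlt, lowerPrefix_of_le r (by omega : i ≤ K - 1),
    sub_sub_sub_cancel_right, mul_assoc, sub_mul, one_mul, coeffZ_sub, coeffZ_X_pow_mul,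
    Nat.cast_sub (hr (Nat.sub_le i 1)), sub_add_eq_sub_sub]

lemma lowerPrefix_raisePrefix (i : ℕ) (r : ℕ → ℕ) : lowerPrefix i (raisePrefix i r) = r := by
  funext t
  simp only [lowerPrefix, raisePrefix]
  split_ifs <;> rfl

lemma raisePrefix_lowerPrefix {i : ℕ} {r : ℕ → ℕ} (hr : ∀ t < i, 1 ≤ r t) :
    raisePrefix i (lowerPrefix i r) = r := by
  funext t
  simp only [lowerPrefix, raisePrefix]
  split_ifs with ht
  · exact Nat.sub_add_cancel (hr t ht)
  · rfl

lemma one_le_of_ne_of_succ_le {r : ℕ → ℕ} (hr : ∀ t, r (t + 1) ≤ r t) {i : ℕ}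
    (hne : r (i - 1) ≠ r i) : ∀ t < i, 1 ≤ r t :=
  one_le_of_lt_of_antitone (antitone_nat_of_succ_le hr)
    (lt_of_le_of_ne (antitone_nat_of_succ_le hr (Nat.sub_le i 1)) hne.symm)

lemma mapsTo_lowerPrefix {K i : ℕ} (hi : 1 ≤ i) (hiK : i ≤ K) (a : ℕ) :
    Set.MapsTo (Prod.map (lowerPrefix i) id)
      ({p ∈ Tup K | p.1 0 = a + 1} ∩ {p | p.1 (i - 1) ≠ p.1 i}) {p ∈ Tup K | p.1 0 = a} := by
  rintro ⟨r, s⟩ ⟨⟨⟨hr, hrK, hs, hsK⟩, hr0⟩, hne⟩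
  replace hne : r (i - 1) ≠ r i := hne
  dsimp only at hr hrK hs hsK hr0
  have hpos := one_le_of_ne_of_succ_le hr hne
  refine ⟨⟨fun t => ?_, fun t ht => ?_, hs, hsK⟩, ?_⟩ <;> simp only [Prod.map, lowerPrefix]
  · have := hr t
    by_cases h : t + 1 < i
    · have := hpos (t + 1) h
      rw [if_pos h, if_pos (by omega)]
      omega
    by_cases h' : t < i
    · obtain rfl : i = t + 1 := by omega
      rw [Nat.add_sub_cancel] at hne
      rw [if_neg h, if_pos h']
      omega
    · rwa [if_neg h, if_neg h']
  · rw [if_neg (by omega), hrK t ht]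
  · rw [if_pos (by omega), hr0, Nat.add_sub_cancel]

lemma mapsTo_raisePrefix {K i : ℕ} (hi : 1 ≤ i) (hiK : i ≤ K) (a : ℕ) :
    Set.MapsTo (Prod.map (raisePrefix i) id)
      {p ∈ Tup K | p.1 0 = a} ({p ∈ Tup K | p.1 0 = a + 1} ∩ {p | p.1 (i - 1) ≠ p.1 i}) := by
  rintro ⟨r, s⟩ ⟨⟨hr, hrK, hs, hsK⟩, hr0⟩
  dsimp only at hr hrK hs hsK hr0
  refine ⟨⟨⟨fun t => ?_, fun t ht => ?_, hs, hsK⟩, ?_⟩, ?_⟩ <;>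
    simp only [Prod.map, id_eq, raisePrefix]
  · have := hr t
    split_ifs <;> omega
  · rw [if_neg (by omega), hrK t ht]
  · rw [if_pos (by omega), hr0]
  · have := hr (i - 1)
    rw [Nat.sub_add_cancel hi] at this
    show raisePrefix i r (i - 1) ≠ raisePrefix i r i
    simp only [raisePrefix, if_pos (Nat.sub_lt hi one_pos), lt_irrefl, if_false]
    omega

lemma bijOn_lowerPrefix {K i : ℕ} (hi : 1 ≤ i) (hiK : i ≤ K) (a : ℕ) :
    Set.BijOn (Prod.map (lowerPrefix i) id)
      ({p ∈ Tup K | p.1 0 = a + 1} ∩ {p | p.1 (i - 1) ≠ p.1 i}) {p ∈ Tup K | p.1 0 = a} := by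
  refine Set.InvOn.bijOn (f' := Prod.map (raisePrefix i) id) ⟨?_, ?_⟩
    (mapsTo_lowerPrefix hi hiK a) (mapsTo_raisePrefix hi hiK a)
  · rintro ⟨r, s⟩ ⟨⟨hp, -⟩, hne⟩
    simp only [Prod.map, id_eq, Prod.mk.injEq, and_true]
    exact raisePrefix_lowerPrefix (one_le_of_ne_of_succ_le hp.1 hne)
  · rintro ⟨r, s⟩ -
    simp only [Prod.map, id_eq, lowerPrefix_raisePrefix]

lemma Scoef_sub_Scoef_shiftRho {K i : ℕ} (hi : 1 ≤ i) (hiK : i < K)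
    (tail : ℕ → ℕ → PowerSeries ℚ) (ρ σ : ℕ → ℤ) (a : ℕ) (b : ℤ) :
    Scoef K tail ρ σ a b - Scoef K tail (shiftRho i ρ) σ a b =
      if a = 0 then 0
      else Scoef K tail (fun t => if t < i then ρ t + 2 else ρ t)
        (fun t => if t < i then σ t - 1 else σ t) (a - 1)
        (b - ((i : ℤ) + ∑ j ∈ Finset.range i, ρ j)) := by
  rw [Scoef_eq_finsum, Scoef_eq_finsum, ← finsum_mem_sub_distrib'
    (finite_inter_support_scoefTerm K tail ρ σ a b)
    (finite_inter_support_scoefTerm K tail (shiftRho i ρ) σ a b),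
    finsum_mem_congr rfl fun p hp => scoefTerm_sub_scoefTerm_shiftRho hi hiK tail ρ σ b hp.1]
  rcases a with _ | a
  · refine finsum_mem_eq_zero_of_forall_eq_zero fun p ⟨hp, hp0⟩ => if_pos ?_
    have hzero : ∀ t, p.1 t = 0 := fun t =>
      Nat.le_zero.mp (hp0 ▸ antitone_nat_of_succ_le hp.1 (Nat.zero_le t))
    rw [hzero, hzero]
  · rw [if_neg (Nat.succ_ne_zero a), Nat.add_sub_cancel, Scoef_eq_finsum,
      finsum_mem_inter_support_eq' _ _ ({p ∈ Tup K | p.1 0 = a + 1} ∩ {p | p.1 (i - 1) ≠ p.1 i})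
        fun p hp => ⟨fun hS => ⟨hS, fun h => hp (if_pos h)⟩, And.left⟩]
    exact finsum_mem_eq_of_bijOn _ (bijOn_lowerPrefix hi hiK.le a) fun p hp => if_neg hp.2

/-- Stated coefficientwise in `z^a q^b`; the paper's `δ_i` is the 0-indexed coordinate `i - 1`,
and multiplication by `z q^e` shifts `(a, b)` to `(a - 1, b - e)`. -/
theorem Sm_R1_general (k : ℕ) (ρ σ : ℕ → ℤ) (i : ℕ) (hi1 : 1 ≤ i) (hi2 : i ≤ k - 2)
    (a : ℕ) (b : ℤ) :
    (let K := k - 1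
     let ρ₂ : ℕ → ℤ := fun t => if t = i - 1 then ρ t + 1 else if t = i then ρ t - 1 else ρ t
     let ρ₃ : ℕ → ℤ := fun t => if t < i then ρ t + 2 else ρ t
     let σ₃ : ℕ → ℤ := fun t => if t < i then σ t - 1 else σ t
     Scoef K tailp1 ρ σ a b - Scoef K tailp1 ρ₂ σ a b -
       (if a = 0 then 0
        else Scoef K tailp1 ρ₃ σ₃ (a - 1) (b - ((i : ℤ) + ∑ j ∈ Finset.range i, ρ j))) = 0) :=
  sub_eq_zero.mpr (Scoef_sub_Scoef_shiftRho hi1 (by omega) tailp1 ρ σ a b)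

/-- The recurrence `R₁⁽ⁱ⁾(ρ|σ)` for `m = 3k+1`:
`S_m(ρ|σ) - S_m(ρ+δ_i-δ_{i+1}|σ) - z q^{i+Σ_{j=1}^i ρ_j} S_m(ρ+2Σ_{j≤i}δ_j | σ-Σ_{j≤i}δ_j) = 0`,
stated coefficientwise in `z^a q^b` (1-indexed `δ_i` corresponds to 0-indexed coordinate `i-1`;
multiplication by `z q^e` shifts `(a,b) ↦ (a-1, b-e)`). -/
theorem Sm_R1 (k : ℕ) (hk : 2 ≤ k) (ρ σ : ℕ → ℤ) (i : ℕ) (hi1 : 1 ≤ i) (hi2 : i ≤ k - 2)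
    (a : ℕ) (b : ℤ) :
    (let K := k - 1
     let ρ₂ : ℕ → ℤ := fun t => if t = i - 1 then ρ t + 1 else if t = i then ρ t - 1 else ρ t
     let ρ₃ : ℕ → ℤ := fun t => if t < i then ρ t + 2 else ρ t
     let σ₃ : ℕ → ℤ := fun t => if t < i then σ t - 1 else σ t
     Scoef K tailp1 ρ σ a b - Scoef K tailp1 ρ₂ σ a b -
       (if a = 0 then 0
        else Scoef K tailp1 ρ₃ σ₃ (a - 1) (b - ((i : ℤ) + ∑ j ∈ Finset.range i, ρ j))) = 0) :=
  Sm_R1_general k ρ σ i hi1 hi2 a b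
end
end
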